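/- arXiv:0704.1553 — 2 statements merged into one kernel-verified Lean document; each statement's English description precedes it below -/
import Mathlib

section
/- Let B be an operator algebra with a *-admissible sequence of cones {C_n}. For x ∈ M_n(B), let x = x₁ + i x₂ with x₁, x₂ ∈ C_n − C_n be the unique such decomposition and set x^♯ = x₁ − i x₂; similarly write b^♯ for b ∈ B using C₁. Then for every A = (a_ij) ∈ M_n(B), the involution induced by C_n is computed entrywise: A^♯ = (a_ji^♯)_{i,j}, i.e., the (i,j) entry of A^♯ equals (a_ji)^♯. -/
/-!
Compressing `X ∈ Cₙ − Cₙ` by the scalar columns `eᵢ + λ eⱼ` (axiom (3ii)) lands in `C₁ − C₁`, and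
the polarization identity over `λ ∈ {±1, ±i}` writes `xᵢⱼ = p + i q` and `xⱼᵢ = p − i q` with
`p, q ∈ C₁ − C₁`; so `xⱼᵢ = xᵢⱼ^♯` for such `X`. Splitting `A = X₁ + i X₂` and using uniqueness of
the decomposition of `aⱼᵢ` in `B` gives `(X₁ − i X₂)ᵢⱼ = aⱼᵢ^♯`.
-/

open scoped ComplexOrder
open Matrix

noncomputable section

instance PiLp.instCompleteSpace' {p : ENNReal} {ι : Type*} {β : ι → Type*}
    [∀ i, UniformSpace (β i)] [∀ i, CompleteSpace (β i)] : CompleteSpace (PiLp p β) :=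
  (PiLp.uniformEquiv p β).completeSpace_iff.2 inferInstance

/-- The bounded operator on the Hilbert space `Hⁿ` (modeled as `PiLp 2`) associated with an
`n × n` matrix of bounded operators on `H`, via `(T v) i = ∑ j, T i j (v j)`. -/
def matCLM {H : Type*} [NormedAddCommGroup H] [InnerProductSpace ℂ H] {n : ℕ}
    (T : Matrix (Fin n) (Fin n) (H →L[ℂ] H)) :
    (PiLp 2 fun _ : Fin n => H) →L[ℂ] PiLp 2 fun _ : Fin n => H :=
  ((PiLp.continuousLinearEquiv 2 ℂ fun _ : Fin n => H).symm.toContinuousLinearMap.comp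
    (ContinuousLinearMap.pi fun i : Fin n =>
      ∑ j : Fin n, (T i j).comp (ContinuousLinearMap.proj j))).comp
    (PiLp.continuousLinearEquiv 2 ℂ fun _ : Fin n => H).toContinuousLinearMap

/-- The norm `‖·‖ₙ` on `Mₙ(B(H))`, i.e. the operator norm of the associated operator
on `B(Hⁿ)`. -/
def matNorm {H : Type*} [NormedAddCommGroup H] [InnerProductSpace ℂ H] {n : ℕ}
    (T : Matrix (Fin n) (Fin n) (H →L[ℂ] H)) : ℝ := ‖matCLM T‖

/-- Positivity of a matrix of operators, i.e. positivity of the associated operator on `Hⁿ`. -/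
def matPos {H : Type*} [NormedAddCommGroup H] [InnerProductSpace ℂ H] [CompleteSpace H] {n : ℕ}
    (T : Matrix (Fin n) (Fin n) (H →L[ℂ] H)) : Prop := (matCLM T).IsPositive

/-- The set of differences `S − S = {a − b : a, b ∈ S}` of a cone `S`. -/
def diffCone {α : Type*} [Sub α] (S : Set α) : Set α := {x | ∃ a ∈ S, ∃ b ∈ S, x = a - b}

/-- A sequence of cones `Cₙ ⊆ Mₙ(B)` is `*`-admissible (Definition 2.1 of the paper):
`(0)` the cones consist of matrices with entries in `B`, are closed under addition and
multiplication by nonnegative reals, and are closed in the norm `‖·‖ₙ` of `B(Hⁿ)`;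
`(1)` `e ∈ C₁`;
`(2i)` `Mₙ(B) = (Cₙ − Cₙ) + i(Cₙ − Cₙ)`; `(2ii)` `Cₙ ∩ (−Cₙ) = {0}`;
`(2iii)` `(Cₙ − Cₙ) ∩ i(Cₙ − Cₙ) = {0}`;
`(3i)` `x c x ∈ Cₙ` for `x ∈ Cₙ − Cₙ`, `c ∈ Cₙ`;
`(3ii)` `S* Cₙ S ⊆ Cₘ` for scalar matrices `S ∈ M_{n×m}(ℂ)`;
`(4)` there is `r > 0` with `r‖x‖ eₙ + x ∈ Cₙ` for all `x ∈ Cₙ − Cₙ`;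
`(5)` there is `K > 0` with `‖x‖ₙ ≤ K ‖x + i y‖ₙ` for all `x, y ∈ Cₙ − Cₙ`. -/
def IsStarAdmissible {H : Type*} [NormedAddCommGroup H] [InnerProductSpace ℂ H]
    [CompleteSpace H] (B : Subalgebra ℂ (H →L[ℂ] H))
    (C : ∀ n : ℕ, Set (Matrix (Fin n) (Fin n) (H →L[ℂ] H))) : Prop :=
  (∀ n, ∀ X ∈ C n, ∀ i j, X i j ∈ B) ∧
  (∀ n, ∀ X ∈ C n, ∀ Y ∈ C n, X + Y ∈ C n) ∧
  (∀ n, ∀ X ∈ C n, ∀ r : ℝ, 0 ≤ r → (r : ℂ) • X ∈ C n) ∧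
  (∀ (n : ℕ) (f : ℕ → Matrix (Fin n) (Fin n) (H →L[ℂ] H))
      (X : Matrix (Fin n) (Fin n) (H →L[ℂ] H)), (∀ k, f k ∈ C n) →
      Filter.Tendsto (fun k => matNorm (f k - X)) Filter.atTop (nhds 0) → X ∈ C n) ∧
  (1 : Matrix (Fin 1) (Fin 1) (H →L[ℂ] H)) ∈ C 1 ∧
  (∀ (n : ℕ) (X : Matrix (Fin n) (Fin n) (H →L[ℂ] H)), (∀ i j, X i j ∈ B) →
      ∃ x ∈ diffCone (C n), ∃ y ∈ diffCone (C n), X = x + Complex.I • y) ∧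
  (∀ n, ∀ X ∈ C n, -X ∈ C n → X = 0) ∧
  (∀ n, ∀ x ∈ diffCone (C n), ∀ y ∈ diffCone (C n), x = Complex.I • y → x = 0) ∧
  (∀ n, ∀ x ∈ diffCone (C n), ∀ c ∈ C n, x * c * x ∈ C n) ∧
  (∀ (n m : ℕ) (S : Matrix (Fin n) (Fin m) ℂ), ∀ X ∈ C n,
      Sᴴ.map (algebraMap ℂ (H →L[ℂ] H)) * X * S.map (algebraMap ℂ (H →L[ℂ] H)) ∈ C m) ∧
  (∃ r : ℝ, 0 < r ∧ ∀ n, ∀ x ∈ diffCone (C n),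
      ((r * matNorm x : ℝ) : ℂ) • (1 : Matrix (Fin n) (Fin n) (H →L[ℂ] H)) + x ∈ C n) ∧
  (∃ K : ℝ, 0 < K ∧ ∀ n, ∀ x ∈ diffCone (C n), ∀ y ∈ diffCone (C n),
      matNorm x ≤ K * matNorm (x + Complex.I • y))

section DiffCone

variable {E : Type*} [AddCommGroup E] {S : Set E}

theorem add_mem_diffCone (hS : ∀ a ∈ S, ∀ b ∈ S, a + b ∈ S) {x y : E}
    (hx : x ∈ diffCone S) (hy : y ∈ diffCone S) : x + y ∈ diffCone S := by
  obtain ⟨a, ha, b, hb, rfl⟩ := hx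
  obtain ⟨c, hc, d, hd, rfl⟩ := hy
  exact ⟨a + c, hS a ha c hc, b + d, hS b hb d hd, by abel⟩

theorem sub_mem_diffCone (hS : ∀ a ∈ S, ∀ b ∈ S, a + b ∈ S) {x y : E}
    (hx : x ∈ diffCone S) (hy : y ∈ diffCone S) : x - y ∈ diffCone S := by
  obtain ⟨a, ha, b, hb, rfl⟩ := hx
  obtain ⟨c, hc, d, hd, rfl⟩ := hy
  exact ⟨a + d, hS a ha d hd, b + c, hS b hb c hc, by abel⟩

variable [Module ℂ E]

theorem ofReal_smul_mem_diffCone (hS : ∀ a ∈ S, ∀ r : ℝ, 0 ≤ r → (r : ℂ) • a ∈ S) {r : ℝ}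
    (hr : 0 ≤ r) {x : E} (hx : x ∈ diffCone S) : (r : ℂ) • x ∈ diffCone S := by
  obtain ⟨a, ha, b, hb, rfl⟩ := hx
  exact ⟨_, hS a ha r hr, _, hS b hb r hr, smul_sub _ _ _⟩

theorem eq_and_eq_of_add_I_smul_eq (hS : ∀ a ∈ S, ∀ b ∈ S, a + b ∈ S)
    (hS_real : ∀ x ∈ diffCone S, ∀ y ∈ diffCone S, x = Complex.I • y → x = 0)
    {u v u' v' : E} (hu : u ∈ diffCone S) (hv : v ∈ diffCone S)
    (hu' : u' ∈ diffCone S) (hv' : v' ∈ diffCone S)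
    (h : u + Complex.I • v = u' + Complex.I • v') : u = u' ∧ v = v' := by
  have hdiff : u - u' = Complex.I • (v' - v) := by
    rw [smul_sub, sub_eq_sub_iff_add_eq_add, h, add_comm]
  have hu_eq : u = u' :=
    sub_eq_zero.mp (hS_real _ (sub_mem_diffCone hS hu hu') _ (sub_mem_diffCone hS hv' hv) hdiff)
  subst hu_eq
  exact ⟨rfl, smul_right_injective E Complex.I_ne_zero (add_left_cancel h)⟩

theorem sub_I_smul_eq_of_add_I_smul_eq (hS : ∀ a ∈ S, ∀ b ∈ S, a + b ∈ S)
    (hS_real : ∀ x ∈ diffCone S, ∀ y ∈ diffCone S, x = Complex.I • y → x = 0)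
    {p₁ q₁ p₂ q₂ u v : E} (hp₁ : p₁ ∈ diffCone S) (hq₁ : q₁ ∈ diffCone S)
    (hp₂ : p₂ ∈ diffCone S) (hq₂ : q₂ ∈ diffCone S) (hu : u ∈ diffCone S) (hv : v ∈ diffCone S)
    (h : (p₁ - Complex.I • q₁) + Complex.I • (p₂ - Complex.I • q₂) = u + Complex.I • v) :
    (p₁ + Complex.I • q₁) - Complex.I • (p₂ + Complex.I • q₂) = u - Complex.I • v := by
  have hregroup : (p₁ + q₂) + Complex.I • (p₂ - q₁) = u + Complex.I • v := by
    rw [← h]; match_scalars <;> simp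
  obtain ⟨rfl, rfl⟩ := eq_and_eq_of_add_I_smul_eq hS hS_real (add_mem_diffCone hS hp₁ hq₂)
    (sub_mem_diffCone hS hp₂ hq₁) hu hv hregroup
  match_scalars <;> simp

theorem polarization {G : ℂ → E} {a b b' d : E}
    (hG : ∀ c : ℂ, G c = a + c • b + star c • b' + (star c * c) • d) :
    let p := ((1 / 4 : ℝ) : ℂ) • (G 1 - G (-1))
    let q := ((1 / 4 : ℝ) : ℂ) • (G (-Complex.I) - G Complex.I)
    b = p + Complex.I • q ∧ b' = p - Complex.I • q := by
  simp only [hG, star_one, star_neg, Complex.star_def, Complex.conj_I]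
  constructor <;> match_scalars <;> ring_nf <;> norm_num

end DiffCone

section Compress

variable {A : Type*} [Ring A] [Algebra ℂ A] {n : ℕ}

def compress (s : Fin n → ℂ) (X : Matrix (Fin n) (Fin n) A) : Matrix (Fin 1) (Fin 1) A :=
  (replicateCol (Fin 1) s)ᴴ.map (algebraMap ℂ A) * X *
    (replicateCol (Fin 1) s).map (algebraMap ℂ A)

theorem compress_sub (s : Fin n → ℂ) (X Y : Matrix (Fin n) (Fin n) A) :
    compress s (X - Y) = compress s X - compress s Y := by
  rw [compress, compress, compress, Matrix.mul_sub, Matrix.sub_mul]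

theorem compress_eq (s : Fin n → ℂ) (X : Matrix (Fin n) (Fin n) A) :
    compress s X = of fun _ _ => ∑ k, ∑ l, (star (s k) * s l) • X k l := by
  ext
  simp only [compress, mul_apply, map_apply, conjTranspose_apply, replicateCol_apply, of_apply,
    Algebra.algebraMap_eq_smul_one, smul_mul_assoc, mul_smul_comm, one_mul, mul_one,
    Finset.smul_sum, smul_smul]
  rw [Finset.sum_comm]
  simp only [mul_comm]

theorem compress_single_add_smul_single (i j : Fin n) (c : ℂ)
    (X : Matrix (Fin n) (Fin n) A) :
    compress (Pi.single i 1 + c • Pi.single j 1) X =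
      (of fun _ _ => X i i) + c • (of fun _ _ => X i j) + star c • (of fun _ _ => X j i) +
        (star c * c) • (of fun _ _ => X j j) := by
  ext
  simp only [compress_eq, of_apply, Matrix.add_apply, Matrix.smul_apply, Pi.add_apply,
    Pi.single_apply, Pi.smul_apply, smul_eq_mul, mul_ite, mul_one, mul_zero, star_add, RCLike.star_def, apply_ite (starRingEnd ℂ), map_one,
    map_zero, mul_add, add_mul, ite_mul, one_mul, zero_mul, add_smul, ite_smul, one_smul,
    zero_smul, Finset.sum_add_distrib, Finset.sum_ite_eq', Finset.mem_univ, if_true]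
  abel

theorem exists_entry_decomp_of_mem_diffCone {S : Set (Matrix (Fin n) (Fin n) A)}
    {T : Set (Matrix (Fin 1) (Fin 1) A)} (hT_add : ∀ a ∈ T, ∀ b ∈ T, a + b ∈ T)
    (hT_smul : ∀ a ∈ T, ∀ r : ℝ, 0 ≤ r → (r : ℂ) • a ∈ T)
    (hcompress : ∀ s : Fin n → ℂ, ∀ X ∈ S, compress s X ∈ T)
    {X : Matrix (Fin n) (Fin n) A} (hX : X ∈ diffCone S) (i j : Fin n) :
    ∃ p ∈ diffCone T, ∃ q ∈ diffCone T,
      (of fun _ _ => X i j) = p + Complex.I • q ∧ (of fun _ _ => X j i) = p - Complex.I • q := by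
  have hG : ∀ c : ℂ, compress (Pi.single i 1 + c • Pi.single j 1) X ∈ diffCone T := by
    obtain ⟨a, ha, b, hb, rfl⟩ := hX
    exact fun c => ⟨_, hcompress _ a ha, _, hcompress _ b hb, compress_sub _ a b⟩
  have hquarter : (0 : ℝ) ≤ 1 / 4 := by norm_num
  exact ⟨_, ofReal_smul_mem_diffCone hT_smul hquarter (sub_mem_diffCone hT_add (hG _) (hG _)),
    _, ofReal_smul_mem_diffCone hT_smul hquarter (sub_mem_diffCone hT_add (hG _) (hG _)),
    polarization fun c => compress_single_add_smul_single i j c X⟩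

end Compress

theorem stmt5_general {H : Type*} [NormedAddCommGroup H] [InnerProductSpace ℂ H] [CompleteSpace H]
    (B : Subalgebra ℂ (H →L[ℂ] H))
    (C : ∀ n : ℕ, Set (Matrix (Fin n) (Fin n) (H →L[ℂ] H)))
    (hC : IsStarAdmissible B C) {n : ℕ}
    (A X₁ X₂ U V : Matrix (Fin n) (Fin n) (H →L[ℂ] H))
    -- `A = X₁ + i X₂` is a decomposition of `A` in `Mₙ(B)` with `X₁, X₂ ∈ Cₙ − Cₙ`
    (hX₁ : X₁ ∈ diffCone (C n)) (hX₂ : X₂ ∈ diffCone (C n))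
    (hA : A = X₁ + Complex.I • X₂)
    -- while the entries of `U, V` give decompositions `a_{ij} = u_{ij} + i v_{ij}` in `B`,
    -- with `u_{ij}, v_{ij} ∈ C₁ − C₁` (viewed as `1 × 1` matrices)
    (hU : ∀ i j, (Matrix.of fun _ _ : Fin 1 => U i j) ∈ diffCone (C 1))
    (hV : ∀ i j, (Matrix.of fun _ _ : Fin 1 => V i j) ∈ diffCone (C 1))
    (hUV : A = U + Complex.I • V) :
    -- then `A^♯ = X₁ − i X₂` is the transpose of the matrix of entrywise involutions
    X₁ - Complex.I • X₂ = (U - Complex.I • V)ᵀ := by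
  obtain ⟨-, hadd, hsmul, -, -, -, -, hreal, -, hcompress, -, -⟩ := hC
  have hcompress₁ : ∀ s : Fin n → ℂ, ∀ X ∈ C n, compress s X ∈ C 1 :=
    fun s => hcompress n 1 (replicateCol (Fin 1) s)
  refine Matrix.ext fun i j => ?_
  obtain ⟨p₁, hp₁, q₁, hq₁, hX₁ij, hX₁ji⟩ :=
    exists_entry_decomp_of_mem_diffCone (hadd 1) (hsmul 1) hcompress₁ hX₁ i j
  obtain ⟨p₂, hp₂, q₂, hq₂, hX₂ij, hX₂ji⟩ :=
    exists_entry_decomp_of_mem_diffCone (hadd 1) (hsmul 1) hcompress₁ hX₂ i j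
  have hAji : (of fun _ _ : Fin 1 => X₁ j i) + Complex.I • (of fun _ _ : Fin 1 => X₂ j i)
      = (of fun _ _ : Fin 1 => U j i) + Complex.I • (of fun _ _ : Fin 1 => V j i) :=
    congrArg (fun M : Matrix (Fin n) (Fin n) (H →L[ℂ] H) => of fun _ _ : Fin 1 => M j i)
      (hA.symm.trans hUV)
  rw [hX₁ji, hX₂ji] at hAji
  have hsharp := sub_I_smul_eq_of_add_I_smul_eq (hadd 1) (hreal 1) hp₁ hq₁ hp₂ hq₂
    (hU j i) (hV j i) hAji
  rw [← hX₁ij, ← hX₂ij] at hsharp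
  exact congrFun₂ hsharp 0 0

/-- For a `*`-admissible sequence of cones on an operator algebra `B`, the
involution `x = x₁ + i x₂ ↦ x^♯ = x₁ − i x₂` on `Mₙ(B)` is computed entrywise from the involution
on `B`: `(A^♯)_{ij} = (a_{ji})^♯`. -/
theorem stmt5 {H : Type*} [NormedAddCommGroup H] [InnerProductSpace ℂ H] [CompleteSpace H]
    (B : Subalgebra ℂ (H →L[ℂ] H)) (hBclosed : IsClosed (B : Set (H →L[ℂ] H)))
    (C : ∀ n : ℕ, Set (Matrix (Fin n) (Fin n) (H →L[ℂ] H)))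
    (hC : IsStarAdmissible B C) {n : ℕ}
    (A X₁ X₂ U V : Matrix (Fin n) (Fin n) (H →L[ℂ] H))
    -- `A = X₁ + i X₂` is a decomposition of `A` in `Mₙ(B)` with `X₁, X₂ ∈ Cₙ − Cₙ`
    (hX₁ : X₁ ∈ diffCone (C n)) (hX₂ : X₂ ∈ diffCone (C n))
    (hA : A = X₁ + Complex.I • X₂)
    -- while the entries of `U, V` give decompositions `a_{ij} = u_{ij} + i v_{ij}` in `B`,
    -- with `u_{ij}, v_{ij} ∈ C₁ − C₁` (viewed as `1 × 1` matrices)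
    (hU : ∀ i j, (Matrix.of fun _ _ : Fin 1 => U i j) ∈ diffCone (C 1))
    (hV : ∀ i j, (Matrix.of fun _ _ : Fin 1 => V i j) ∈ diffCone (C 1))
    (hUV : A = U + Complex.I • V) :
    -- then `A^♯ = X₁ − i X₂` is the transpose of the matrix of entrywise involutions
    X₁ - Complex.I • X₂ = (U - Complex.I • V)ᵀ :=
  stmt5_general B C hC A X₁ X₂ U V hX₁ hX₂ hA hU hV hUV
end
end

section
/- Let B be an operator algebra with a *-admissible sequence of cones {C_n}. Then for every n, every c ∈ C_n and every x₁, x₂ ∈ C_n − C_n, one has (x₁ − i x₂) c (x₁ + i x₂) ∈ C_n. -/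
open scoped ComplexOrder
open Matrix

noncomputable section

/-! With `X = diag(x₁, x₂) ∈ C₂ₙ − C₂ₙ` and `E = T* c T = [c c; c c] ∈ C₂ₙ` for the scalar row
`T = [1 1]` (both from (3ii) and additivity), axiom (3i) gives `X E X ∈ C₂ₙ`. Compressing with the
scalar column `S = [1; i]` via (3ii) then yields
`S* X E X S = (S* X T*) c (T X S) = (x₁ − i x₂) c (x₁ + i x₂) ∈ Cₙ`. -/

section ScalarCongruence

variable {A : Type*} [Ring A] [Algebra ℂ A]

-- The ascription selects `Matrix` multiplication over the `CStarMatrix` default instance.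
def scalarCongr {ι κ : Type*} [Fintype ι] (S : Matrix ι κ ℂ) (X : Matrix ι ι A) :
    Matrix κ κ A :=
  (Sᴴ.map (algebraMap ℂ A) * X : Matrix κ ι A) * S.map (algebraMap ℂ A)

lemma reindex_scalarCongr {ι κ ι' κ' : Type*} [Fintype ι] [Fintype ι']
    (eι : ι ≃ ι') (eκ : κ ≃ κ') (S : Matrix ι κ ℂ) (X : Matrix ι ι A) :
    reindex eκ eκ (scalarCongr S X) = scalarCongr (reindex eι eκ S) (reindex eι eι X) := by
  simp only [scalarCongr, reindex_apply, conjTranspose_submatrix, ← submatrix_map,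
    submatrix_mul_equiv]

lemma map_algebraMap_smul_one {m : Type*} [DecidableEq m] (z : ℂ) :
    (z • (1 : Matrix m m ℂ)).map (algebraMap ℂ A) = z • 1 := by
  rw [Matrix.map_smul _ _ (fun a => by simp [Algebra.smul_def]),
    Matrix.map_one _ (map_zero _) (map_one _)]

lemma scalarCongr_fromCols_one_zero {m n : Type*} [Fintype m] [DecidableEq m]
    (M : Matrix m m A) : scalarCongr (fromCols 1 (0 : Matrix m n ℂ)) M = fromBlocks M 0 0 0 := by
  rw [scalarCongr, conjTranspose_fromCols_eq_fromRows_conjTranspose, fromRows_map, fromCols_map,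
    fromRows_mul, fromRows_mul_fromCols]
  simp

lemma scalarCongr_fromCols_zero_one {m n : Type*} [Fintype m] [DecidableEq m]
    (M : Matrix m m A) : scalarCongr (fromCols (0 : Matrix m n ℂ) 1) M = fromBlocks 0 0 0 M := by
  rw [scalarCongr, conjTranspose_fromCols_eq_fromRows_conjTranspose, fromRows_map, fromCols_map,
    fromRows_mul, fromRows_mul_fromCols]
  simp

lemma scalarCongr_fromRows_one_smul_one {m : Type*} [Fintype m] [DecidableEq m] (z : ℂ)
    (x₁ x₂ c : Matrix m m A) :
    scalarCongr (fromRows 1 (z • 1))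
        (fromBlocks x₁ 0 0 x₂ * scalarCongr (fromCols 1 1) c * fromBlocks x₁ 0 0 x₂) =
      (x₁ + star z • x₂) * c * (x₁ + z • x₂) := by
  set S : Matrix (m ⊕ m) m ℂ := fromRows 1 (z • 1)
  set T : Matrix m (m ⊕ m) ℂ := fromCols 1 1
  set X := fromBlocks x₁ 0 0 x₂
  have hleft : (Sᴴ.map (algebraMap ℂ A) * X : Matrix m (m ⊕ m) A) * Tᴴ.map (algebraMap ℂ A) =
      x₁ + star z • x₂ := by
    rw [conjTranspose_fromRows_eq_fromCols_conjTranspose,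
      conjTranspose_fromCols_eq_fromRows_conjTranspose, conjTranspose_smul, conjTranspose_one,
      fromCols_map, fromRows_map, map_algebraMap_smul_one,
      Matrix.map_one _ (map_zero _) (map_one _), fromCols_mul_fromBlocks, fromCols_mul_fromRows]
    simp
  have hright : (T.map (algebraMap ℂ A) * X : Matrix m (m ⊕ m) A) * S.map (algebraMap ℂ A) =
      x₁ + z • x₂ := by
    rw [fromCols_map, fromRows_map, map_algebraMap_smul_one,
      Matrix.map_one _ (map_zero _) (map_one _), fromCols_mul_fromBlocks, fromCols_mul_fromRows]
    simp
  rw [← hleft, ← hright]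
  simp only [scalarCongr, Matrix.mul_assoc]

/-- Axiom (3ii) of a `*`-admissible sequence of cones. -/
def IsScalarCongrClosed (C : ∀ n : ℕ, Set (Matrix (Fin n) (Fin n) A)) : Prop :=
  ∀ (n m : ℕ) (S : Matrix (Fin n) (Fin m) ℂ), ∀ X ∈ C n, scalarCongr S X ∈ C m

namespace IsScalarCongrClosed

variable {C : ∀ n : ℕ, Set (Matrix (Fin n) (Fin n) A)}

lemma reindex_mem (hC : IsScalarCongrClosed C) {ι κ : Type*} [Fintype ι] {n m : ℕ}
    (eι : ι ≃ Fin n) (eκ : κ ≃ Fin m) (S : Matrix ι κ ℂ) {X : Matrix ι ι A}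
    (hX : reindex eι eι X ∈ C n) : reindex eκ eκ (scalarCongr S X) ∈ C m := by
  rw [reindex_scalarCongr eι]
  exact hC n m _ _ hX

lemma reindex_fromBlocks_mem (hC : IsScalarCongrClosed C) {n₁ n₂ m : ℕ}
    (hadd : ∀ X ∈ C m, ∀ Y ∈ C m, X + Y ∈ C m) (e : Fin n₁ ⊕ Fin n₂ ≃ Fin m)
    {M : Matrix (Fin n₁) (Fin n₁) A} {N : Matrix (Fin n₂) (Fin n₂) A}
    (hM : M ∈ C n₁) (hN : N ∈ C n₂) : reindex e e (fromBlocks M 0 0 N) ∈ C m := by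
  have h₁ := hC.reindex_mem (Equiv.refl _) e (fromCols 1 0) (X := M) (by rwa [reindex_refl_refl])
  have h₂ := hC.reindex_mem (Equiv.refl _) e (fromCols 0 1) (X := N) (by rwa [reindex_refl_refl])
  rw [scalarCongr_fromCols_one_zero] at h₁
  rw [scalarCongr_fromCols_zero_one] at h₂
  have hsplit : fromBlocks M 0 0 N = fromBlocks M 0 0 0 + fromBlocks 0 0 0 N := by
    simp only [fromBlocks_add, add_zero, zero_add]
  rw [hsplit]
  exact hadd _ h₁ _ h₂

lemma reindex_fromBlocks_mem_diffCone (hC : IsScalarCongrClosed C) {n₁ n₂ m : ℕ}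
    (hadd : ∀ X ∈ C m, ∀ Y ∈ C m, X + Y ∈ C m) (e : Fin n₁ ⊕ Fin n₂ ≃ Fin m)
    {x₁ : Matrix (Fin n₁) (Fin n₁) A} {x₂ : Matrix (Fin n₂) (Fin n₂) A}
    (hx₁ : x₁ ∈ diffCone (C n₁)) (hx₂ : x₂ ∈ diffCone (C n₂)) :
    reindex e e (fromBlocks x₁ 0 0 x₂) ∈ diffCone (C m) := by
  obtain ⟨a₁, ha₁, b₁, hb₁, rfl⟩ := hx₁
  obtain ⟨a₂, ha₂, b₂, hb₂, rfl⟩ := hx₂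
  refine ⟨_, hC.reindex_fromBlocks_mem hadd e ha₁ ha₂,
    _, hC.reindex_fromBlocks_mem hadd e hb₁ hb₂, ?_⟩
  have hsplit :
      fromBlocks (a₁ - b₁) 0 0 (a₂ - b₂) = fromBlocks a₁ 0 0 a₂ - fromBlocks b₁ 0 0 b₂ := by
    simp only [sub_eq_add_neg, fromBlocks_neg, fromBlocks_add, neg_zero, add_zero]
  rw [hsplit]
  rfl

end IsScalarCongrClosed

end ScalarCongruence

theorem stmt6_general {H : Type*} [NormedAddCommGroup H] [InnerProductSpace ℂ H] [CompleteSpace H]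
    (B : Subalgebra ℂ (H →L[ℂ] H))
    (C : ∀ n : ℕ, Set (Matrix (Fin n) (Fin n) (H →L[ℂ] H)))
    (hC : IsStarAdmissible B C) {n : ℕ}
    (c : Matrix (Fin n) (Fin n) (H →L[ℂ] H)) (hc : c ∈ C n)
    (x₁ x₂ : Matrix (Fin n) (Fin n) (H →L[ℂ] H))
    (hx₁ : x₁ ∈ diffCone (C n)) (hx₂ : x₂ ∈ diffCone (C n)) :
    (x₁ - Complex.I • x₂) * c * (x₁ + Complex.I • x₂) ∈ C n := by
  obtain ⟨-, hadd, -, -, -, -, -, -, hsandwich, (hcongr : IsScalarCongrClosed C), -, -⟩ := hC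
  set e : Fin n ⊕ Fin n ≃ Fin (n + n) := finSumFinEquiv
  set X := fromBlocks x₁ 0 0 x₂
  set E := scalarCongr (fromCols 1 1 : Matrix (Fin n) (Fin n ⊕ Fin n) ℂ) c
  have hX : reindex e e X ∈ diffCone (C (n + n)) :=
    hcongr.reindex_fromBlocks_mem_diffCone (hadd _) e hx₁ hx₂
  have hE : reindex e e E ∈ C (n + n) :=
    hcongr.reindex_mem (Equiv.refl _) e _ (by rwa [reindex_refl_refl])
  have hXEX : reindex e e (X * E * X) ∈ C (n + n) := by
    simpa only [reindex_apply, submatrix_mul_equiv] using hsandwich _ _ hX _ hE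
  have h := hcongr.reindex_mem e (Equiv.refl (Fin n)) (fromRows 1 (Complex.I • 1)) hXEX
  rwa [reindex_refl_refl, scalarCongr_fromRows_one_smul_one, Complex.star_def, Complex.conj_I,
    neg_smul, ← sub_eq_add_neg] at h

/-- For a `*`-admissible sequence of cones on an operator algebra `B`:
for every `c ∈ Cₙ` and `x₁, x₂ ∈ Cₙ − Cₙ`, one has `(x₁ − i x₂) c (x₁ + i x₂) ∈ Cₙ`. -/
theorem stmt6 {H : Type*} [NormedAddCommGroup H] [InnerProductSpace ℂ H] [CompleteSpace H]
    (B : Subalgebra ℂ (H →L[ℂ] H)) (hBclosed : IsClosed (B : Set (H →L[ℂ] H)))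
    (C : ∀ n : ℕ, Set (Matrix (Fin n) (Fin n) (H →L[ℂ] H)))
    (hC : IsStarAdmissible B C) {n : ℕ}
    (c : Matrix (Fin n) (Fin n) (H →L[ℂ] H)) (hc : c ∈ C n)
    (x₁ x₂ : Matrix (Fin n) (Fin n) (H →L[ℂ] H))
    (hx₁ : x₁ ∈ diffCone (C n)) (hx₂ : x₂ ∈ diffCone (C n)) :
    (x₁ - Complex.I • x₂) * c * (x₁ + Complex.I • x₂) ∈ C n :=
  stmt6_general B C hC c hc x₁ x₂ hx₁ hx₂
end
end
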